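/- Let A be a Kreĭn C*-algebra with fundamental symmetries α and β, and suppose α and β commute. Then x ↦ ‖x‖_α and x ↦ ‖x‖_β, the unique C*-norms associated to α and β respectively, are equivalent norms on A. -/

import Mathlib

/-!
For a fundamental symmetry `γ` with C*-norm `N`, the norm of a `γ`-selfadjoint element
(`γ (star s) = s`) is its spectral radius, which is a purely algebraic invariant of `A`; and the
spectral radius of any element is bounded by any of these norms. So for `y = α (star x) * x`,
`‖x‖_α ^ 2 = ‖y‖_α = r(y) ≤ ‖y‖_β ≤ ‖α (star x)‖_β * ‖x‖_β`. Since `α` commutes with `β`, it is a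
`*`-automorphism of the `β`-C*-algebra and hence `‖·‖_β`-isometric, which gives
`‖α (star x)‖_β = ‖x‖_β`. Thus `‖x‖_α ≤ ‖x‖_β`, and by symmetry the two norms coincide.
-/

/-- An admissible (Kreĭn C*-) norm on a complex `*`-algebra `A` relative to a
`*`-automorphism `γ`: a complete submultiplicative algebra norm satisfying
`N (γ (star x) * x) = (N x)^2`. -/
structure KreinCStarNorm (A : Type*) [Ring A] [StarRing A] [Algebra ℂ A] (γ : A → A) where
  N : A → ℝ
  nonneg : ∀ x, 0 ≤ N x
  eq_zero : ∀ x, N x = 0 → x = 0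
  add_le : ∀ x y, N (x + y) ≤ N x + N y
  smul : ∀ (c : ℂ) (x : A), N (c • x) = ‖c‖ * N x
  mul_le : ∀ x y, N (x * y) ≤ N x * N y
  cstar : ∀ x, N (γ (star x) * x) = (N x) ^ 2
  complete : ∀ u : ℕ → A,
    (∀ ε > (0 : ℝ), ∃ n₀, ∀ m ≥ n₀, ∀ n ≥ n₀, N (u m - u n) < ε) →
    ∃ l : A, ∀ ε > (0 : ℝ), ∃ n₀, ∀ n ≥ n₀, N (u n - l) < ε

open Filter ENNReal

-- Mathlib's `IsSelfAdjoint.spectralRadius_eq_nnnorm` assumes `StarModule ℂ X`, which the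
-- twisted involutions below need not satisfy.
theorem IsSelfAdjoint.spectralRadius_eq_nnnorm_of_cstarRing {X : Type*} [NormedRing X]
    [NormedAlgebra ℂ X] [CompleteSpace X] [StarRing X] [CStarRing X] {a : X}
    (ha : IsSelfAdjoint a) : spectralRadius ℂ a = ‖a‖₊ := by
  refine tendsto_nhds_unique ?_
    (tendsto_const_nhds (f := (atTop : Filter ℕ)) (x := (‖a‖₊ : ℝ≥0∞)))
  convert (spectrum.pow_nnnorm_pow_one_div_tendsto_nhds_spectralRadius a).comp
    (tendsto_pow_atTop_atTop_of_one_lt one_lt_two) using 1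
  funext n
  rw [Function.comp_apply, ha.nnnorm_pow_two_pow, ENNReal.coe_pow, ← rpow_natCast, ← rpow_mul]
  simp

namespace KreinCStarNorm

variable {A : Type*} [Ring A] [StarRing A] [Algebra ℂ A]

section Banach

variable {γ : A → A} (N : KreinCStarNorm A γ)

theorem N_zero : N.N 0 = 0 := by
  simpa using N.smul 0 0

theorem N_neg (x : A) : N.N (-x) = N.N x := by
  simpa using N.smul (-1) x

def BanachModel (_N : KreinCStarNorm A γ) : Type _ := A

instance : Ring (BanachModel N) := inferInstanceAs (Ring A)

instance : Algebra ℂ (BanachModel N) := inferInstanceAs (Algebra ℂ A)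

noncomputable instance : NormedRing (BanachModel N) :=
  { (AddGroupNorm.toNormedAddCommGroup
      { toFun := N.N
        map_zero' := N.N_zero
        add_le' := N.add_le
        neg' := N.N_neg
        eq_zero_of_map_eq_zero' := N.eq_zero } : NormedAddCommGroup (BanachModel N)),
    (inferInstance : Ring (BanachModel N)) with
    norm_mul_le := N.mul_le }

theorem BanachModel.norm_eq (x : A) : ‖(id x : BanachModel N)‖ = N.N x := rfl

noncomputable instance : NormedAlgebra ℂ (BanachModel N) :=
  { (inferInstance : Algebra ℂ (BanachModel N)) with
    norm_smul_le := fun c x => (N.smul c x).le }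

instance : CompleteSpace (BanachModel N) := by
  refine Metric.complete_of_cauchySeq_tendsto fun u hu => ?_
  simp only [Metric.cauchySeq_iff, dist_eq_norm] at hu
  obtain ⟨l, hl⟩ := N.complete u hu
  refine ⟨l, Metric.tendsto_atTop.2 fun ε hε => ?_⟩
  obtain ⟨n₀, hn₀⟩ := hl ε hε
  exact ⟨n₀, fun n hn => (dist_eq_norm (u n) (id l : BanachModel N)).trans_lt (hn₀ n hn)⟩

end Banach

variable {γ : A ≃⋆ₐ[ℂ] A}

theorem N_one [Nontrivial A] (N : KreinCStarNorm A γ) : N.N 1 = 1 := by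
  have hsq : N.N 1 ^ 2 = N.N 1 := by simpa using (N.cstar 1).symm
  have hne : N.N 1 ≠ 0 := fun h => one_ne_zero (N.eq_zero 1 h)
  rw [sq] at hsq
  exact mul_left_cancel₀ hne (hsq.trans (mul_one _).symm)

instance [Nontrivial A] (N : KreinCStarNorm A γ) : NormOneClass (BanachModel N) :=
  ⟨N.N_one⟩

theorem spectralRadius_le_ofReal (N : KreinCStarNorm A γ) (a : A) :
    spectralRadius ℂ a ≤ ENNReal.ofReal (N.N a) := by
  rcases subsingleton_or_nontrivial A with hA | hA
  · simp [spectrum.SpectralRadius.of_subsingleton]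
  · calc spectralRadius ℂ a ≤ ‖(id a : BanachModel N)‖₊ :=
          spectrum.spectralRadius_le_nnnorm (A := BanachModel N) a
      _ = ENNReal.ofReal (N.N a) := by
        rw [← BanachModel.norm_eq N a, ofReal_norm, enorm_eq_nnnorm]

theorem map_star_map_star_mul_self (hγ : Function.Involutive γ) (x : A) :
    γ (star (γ (star x) * x)) = γ (star x) * x := by
  rw [star_mul, map_mul, ← map_star, star_star, hγ]

@[reducible]
def twistedStarRing (hγ : Function.Involutive γ) : StarRing A where
  star x := γ (star x)
  star_involutive x := by simp only [← map_star, star_star, hγ x]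
  star_mul x y := by simp only [star_mul, map_mul]
  star_add x y := by simp only [star_add, map_add]

def CStarModel (_hγ : Function.Involutive γ) (N : KreinCStarNorm A γ) : Type _ := BanachModel N

section CStarModel

variable (hγ : Function.Involutive γ) (N : KreinCStarNorm A γ)

noncomputable instance : NormedRing (CStarModel hγ N) :=
  inferInstanceAs (NormedRing (BanachModel N))

noncomputable instance : NormedAlgebra ℂ (CStarModel hγ N) :=
  inferInstanceAs (NormedAlgebra ℂ (BanachModel N))

instance : CompleteSpace (CStarModel hγ N) := inferInstanceAs (CompleteSpace (BanachModel N))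

instance : StarRing (CStarModel hγ N) := (twistedStarRing hγ : StarRing A)

instance : CStarRing (CStarModel hγ N) where
  norm_mul_self_le x := by
    change N.N x * N.N x ≤ N.N (γ (star (id x : A)) * (id x : A))
    rw [N.cstar, sq]; rfl

end CStarModel

theorem spectralRadius_eq_ofReal (hγ : Function.Involutive γ) (N : KreinCStarNorm A γ) {s : A}
    (hs : γ (star s) = s) : spectralRadius ℂ s = ENNReal.ofReal (N.N s) := by
  have hsa : IsSelfAdjoint (id s : CStarModel hγ N) := hs
  calc spectralRadius ℂ s = ‖(id s : CStarModel hγ N)‖₊ :=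
        hsa.spectralRadius_eq_nnnorm_of_cstarRing
    _ = ENNReal.ofReal (N.N s) := by
        rw [← BanachModel.norm_eq N s, ofReal_norm, enorm_eq_nnnorm]; rfl

theorem N_map_star (hγ : Function.Involutive γ) (N : KreinCStarNorm A γ) (x : A) :
    N.N (γ (star x)) = N.N x :=
  norm_star (id x : CStarModel hγ N)

-- `δ` preserves `γ`-selfadjointness and spectra, hence the norms of the elements `γ (star x) * x`.
theorem N_map_of_commute (hγ : Function.Involutive γ) (N : KreinCStarNorm A γ)
    (δ : A ≃⋆ₐ[ℂ] A) (hδ : ∀ x, δ (γ x) = γ (δ x)) (x : A) : N.N (δ x) = N.N x := by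
  set s := γ (star x) * x with hs_def
  have hs : γ (star s) = s := map_star_map_star_mul_self hγ x
  have hδs : γ (star (δ s)) = δ s := by rw [← map_star, ← hδ, hs]
  have hnorm : N.N (δ s) = N.N s := by
    rw [← ENNReal.ofReal_eq_ofReal_iff (N.nonneg _) (N.nonneg _),
      ← spectralRadius_eq_ofReal hγ N hδs, ← spectralRadius_eq_ofReal hγ N hs,
      spectralRadius, spectralRadius, AlgEquiv.spectrum_eq]
  have hsq : N.N (δ x) ^ 2 = N.N x ^ 2 := by
    rw [← N.cstar, ← N.cstar, ← hnorm, hs_def, map_mul, hδ, map_star δ]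
  exact (pow_left_inj₀ (N.nonneg _) (N.nonneg _) two_ne_zero).1 hsq

theorem N_le_of_commute {α β : A ≃⋆ₐ[ℂ] A} (hα : Function.Involutive α)
    (hβ : Function.Involutive β) (hcomm : ∀ x, α (β x) = β (α x))
    (Nα : KreinCStarNorm A α) (Nβ : KreinCStarNorm A β) (x : A) : Nα.N x ≤ Nβ.N x := by
  set y := α (star x) * x
  have hy : Nα.N y ≤ Nβ.N y := by
    rw [← ENNReal.ofReal_le_ofReal_iff (Nβ.nonneg _),
      ← spectralRadius_eq_ofReal hα Nα (map_star_map_star_mul_self hα x)]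
    exact spectralRadius_le_ofReal Nβ y
  have hαstar : Nβ.N (α (star x)) = Nβ.N x := by
    rw [N_map_of_commute hβ Nβ α hcomm, ← N_map_of_commute hβ Nβ β (fun _ => rfl),
      N_map_star hβ Nβ]
  have hsq : Nα.N x ^ 2 ≤ Nβ.N x ^ 2 :=
    calc Nα.N x ^ 2 = Nα.N y := (Nα.cstar x).symm
      _ ≤ Nβ.N y := hy
      _ ≤ Nβ.N (α (star x)) * Nβ.N x := Nβ.mul_le _ _
      _ = Nβ.N x ^ 2 := by rw [hαstar, sq]
  exact (pow_le_pow_iff_left₀ (Nα.nonneg x) (Nβ.nonneg x) two_ne_zero).1 hsq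

end KreinCStarNorm

/-- If `α` and `β` are commuting fundamental symmetries of a Kreĭn C*-algebra `A`,
then the associated C*-norms `‖·‖_α` and `‖·‖_β` are equivalent. -/
theorem commuting_symmetries_norms_equivalent {A : Type*} [Ring A] [StarRing A]
    [Algebra ℂ A]
    (α β : A ≃⋆ₐ[ℂ] A) (hα : ∀ x, α (α x) = x) (hβ : ∀ x, β (β x) = x)
    (hcomm : ∀ x, α (β x) = β (α x))
    (Nα : KreinCStarNorm A α) (Nβ : KreinCStarNorm A β) :
    ∃ c C : ℝ, 0 < c ∧ 0 < C ∧ ∀ x : A,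
      c * Nα.N x ≤ Nβ.N x ∧ Nβ.N x ≤ C * Nα.N x := by
  refine ⟨1, 1, one_pos, one_pos, fun x => ?_⟩
  simpa only [one_mul] using
    And.intro (KreinCStarNorm.N_le_of_commute hα hβ hcomm Nα Nβ x)
      (KreinCStarNorm.N_le_of_commute hβ hα (fun x => (hcomm x).symm) Nβ Nα x)
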